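/- Let m ≥ 2, let A be an m×m positive definite symmetric real matrix, and let B be an m×m positive semidefinite symmetric real matrix. Then ∫_{O(m)} [ (tr(A H B Hᵀ))² − tr((A H B Hᵀ)²) ] dH = [ (tr A)² − tr(A²) ] · [ (tr B)² − tr(B²) ] / (m(m−1)), where the integral is with respect to the Haar probability measure on O(m). -/

import Mathlib

open MeasureTheory Matrix

/-- The Borel-type measurable structure on real matrices (entrywise, as a pi type). -/
noncomputable instance matrixMeasurableSpace (m n : Type*) :
    MeasurableSpace (Matrix m n ℝ) := MeasurableSpace.pi

/-!
Let `wedgeSq X` be the matrix on ordered pairs with entries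
`X p₁ q₁ * X p₂ q₂ - X p₁ q₂ * X p₂ q₁`, i.e. twice the second exterior power of `X`. Then
`wedgeSq X * wedgeSq Y = 2 • wedgeSq (X * Y)` and `tr (wedgeSq X) = (tr X)² - tr (X²)`, so the
integrand is `tr (wedgeSq A * wedgeSq (H B Hᵀ)) / 2` and the integral is `tr (wedgeSq A * E) / 2`,
where `E` is the mean of `wedgeSq (H B Hᵀ)`. By left invariance, `E` is unchanged by
conjugating `H B Hᵀ` with any orthogonal `g`. Permutation matrices make `E` invariant under
relabelling the indices and coordinate reflections kill every entry in which some index occurs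
only once, which forces `E = c • wedgeSq 1`. Taking traces, `c * m (m - 1) = (tr B)² - tr (B²)`.
-/

namespace Matrix

variable {n R : Type*} [CommRing R]

def wedgeSq (X : Matrix n n R) : Matrix (n × n) (n × n) R :=
  of fun p q => X p.1 q.1 * X p.2 q.2 - X p.1 q.2 * X p.2 q.1

@[simp]
lemma wedgeSq_apply (X : Matrix n n R) (p q : n × n) :
    wedgeSq X p q = X p.1 q.1 * X p.2 q.2 - X p.1 q.2 * X p.2 q.1 := rfl

lemma wedgeSq_mul [Fintype n] (X Y : Matrix n n R) :
    wedgeSq X * wedgeSq Y = (2 : R) • wedgeSq (X * Y) := by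
  ext p q
  set f : n → n → R := fun a b => X p.1 a * X p.2 b * (Y a q.1 * Y b q.2 - Y a q.2 * Y b q.1)
  have hsplit : ∀ a b, (X p.1 a * X p.2 b - X p.1 b * X p.2 a) *
      (Y a q.1 * Y b q.2 - Y a q.2 * Y b q.1) = f a b + f b a := fun a b => by
    simp only [f]; ring
  have hf : ∑ a, ∑ b, f a b = wedgeSq (X * Y) p q := by
    simp only [f, wedgeSq_apply, mul_apply, Finset.sum_mul_sum, ← Finset.sum_sub_distrib]
    exact Fintype.sum_congr _ _ fun a => Fintype.sum_congr _ _ fun b => by ring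
  simp only [mul_apply, Fintype.sum_prod_type, wedgeSq_apply, hsplit, Finset.sum_add_distrib]
  rw [Finset.sum_comm (f := fun a b => f b a), hf, smul_apply, smul_eq_mul, two_mul]

lemma trace_wedgeSq [Fintype n] (X : Matrix n n R) :
    (wedgeSq X).trace = X.trace ^ 2 - (X * X).trace := by
  simp only [trace, diag, wedgeSq_apply, Fintype.sum_prod_type, mul_apply, sq,
    Finset.sum_mul_sum, Finset.sum_sub_distrib]

lemma wedgeSq_submatrix (X : Matrix n n R) (e : n → n) :
    wedgeSq (X.submatrix e e) = (wedgeSq X).submatrix (Prod.map e e) (Prod.map e e) := rfl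

lemma wedgeSq_diagonal_mul_mul_diagonal [Fintype n] [DecidableEq n] (d e : n → R)
    (X : Matrix n n R) (p q : n × n) :
    wedgeSq (diagonal d * X * diagonal e) p q
      = d p.1 * d p.2 * (e q.1 * e q.2) * wedgeSq X p q := by
  simp only [wedgeSq_apply, mul_diagonal, diagonal_mul]
  ring

lemma exists_perm_apply_eq_of_ne [DecidableEq n] {i₀ i₁ i k : n} (h₀₁ : i₀ ≠ i₁)
    (hik : i ≠ k) : ∃ σ : Equiv.Perm n, σ i₀ = i ∧ σ i₁ = k := by
  refine ⟨Equiv.swap (Equiv.swap i₀ i i₁) k * Equiv.swap i₀ i, ?_, by simp⟩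
  have : Equiv.swap i₀ i i₁ ≠ i := by
    simpa using (Equiv.swap i₀ i).injective.ne h₀₁.symm
  simp [Equiv.swap_apply_of_ne_of_ne this.symm hik]

theorem exists_eq_smul_wedgeSq_one [DecidableEq n] [Nontrivial n] [IsAddTorsionFree R]
    (E : Matrix (n × n) (n × n) R)
    (hperm : ∀ σ : Equiv.Perm n, E.submatrix (Prod.map σ σ) (Prod.map σ σ) = E)
    (hswap : ∀ i k q, E (k, i) q = -E (i, k) q)
    (hlone : ∀ x k j l, k ≠ x → j ≠ x → l ≠ x → E (x, k) (j, l) = 0) :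
    ∃ c : R, E = c • wedgeSq (1 : Matrix n n R) := by
  obtain ⟨i₀, i₁, h₀₁⟩ := exists_pair_ne n
  refine ⟨E (i₀, i₁) (i₀, i₁), ?_⟩
  have hdiag : ∀ i k, i ≠ k → E (i, k) (i, k) = E (i₀, i₁) (i₀, i₁) := fun i k hik => by
    obtain ⟨σ, rfl, rfl⟩ := exists_perm_apply_eq_of_ne h₀₁ hik
    exact congrFun₂ (hperm σ) (i₀, i₁) (i₀, i₁)
  ext ⟨i, k⟩ ⟨j, l⟩
  simp only [smul_apply, wedgeSq_apply, one_apply, smul_eq_mul]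
  by_cases hik : i = k
  · subst hik
    rw [self_eq_neg.mp (hswap i i (j, l))]
    split_ifs <;> simp
  by_cases hjl : j = i ∧ l = k
  · rw [hjl.1, hjl.2]
    simp [hdiag i k hik, hik]
  by_cases hlj : j = k ∧ l = i
  · rw [hlj.1, hlj.2, hswap k i, hdiag k i (Ne.symm hik)]
    simp [hik, Ne.symm hik]
  by_cases hi : i ≠ j ∧ i ≠ l
  · simp [hlone i k j l (Ne.symm hik) (Ne.symm hi.1) (Ne.symm hi.2), hi.1, hi.2]
  · have hk : k ≠ j ∧ k ≠ l := by grind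
    rw [← neg_neg (E _ _), ← hswap i k, hlone k i j l hik (Ne.symm hk.1) (Ne.symm hk.2)]
    simp [hk.1, hk.2]

lemma permMatrix_mul_mul_transpose [Fintype n] [DecidableEq n] (σ : Equiv.Perm n)
    (X : Matrix n n R) : σ.permMatrix R * X * (σ.permMatrix R)ᵀ = X.submatrix σ σ := by
  rw [transpose_permMatrix, PEquiv.toMatrix_toPEquiv_mul, PEquiv.mul_toMatrix_toPEquiv]
  rfl

lemma permMatrix_mem_orthogonalGroup [Fintype n] [DecidableEq n] (σ : Equiv.Perm n) :
    σ.permMatrix R ∈ orthogonalGroup n R := by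
  rw [mem_orthogonalGroup_iff, transpose_permMatrix, ← permMatrix_mul, inv_mul_cancel,
    permMatrix_one]

lemma diagonal_mem_orthogonalGroup [Fintype n] [DecidableEq n] {d : n → R}
    (hd : ∀ i, d i * d i = 1) : diagonal d ∈ orthogonalGroup n R := by
  rw [mem_orthogonalGroup_iff, diagonal_transpose, diagonal_mul_diagonal, ← diagonal_one]
  exact congrArg diagonal (funext hd)

lemma trace_mul_integral_entrywise {α ι : Type*} [Fintype ι] [MeasurableSpace α]
    {μ : Measure α} (C : Matrix ι ι ℝ) {F : α → Matrix ι ι ℝ}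
    (hF : ∀ p q, Integrable (fun x => F x p q) μ) :
    (C * of fun p q => ∫ x, F x p q ∂μ).trace = ∫ x, (C * F x).trace ∂μ := by
  have hCF : ∀ p r, Integrable (fun x => C p r * F x r p) μ := fun p r => (hF r p).const_mul _
  calc (C * of fun p q => ∫ x, F x p q ∂μ).trace
      = ∑ p, ∑ r, ∫ x, C p r * F x r p ∂μ := by
        simp only [trace, diag, mul_apply, of_apply, integral_const_mul]
    _ = ∫ x, ∑ p, ∑ r, C p r * F x r p ∂μ := by
        rw [integral_finsetSum _ fun p _ => integrable_finsetSum _ fun r _ => hCF p r]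
        exact Finset.sum_congr rfl fun p _ => (integral_finsetSum _ fun r _ => hCF p r).symm
    _ = ∫ x, (C * F x).trace ∂μ := by simp only [trace, diag, mul_apply]

instance borelSpace (m n : Type*) [Fintype m] [Fintype n] : BorelSpace (Matrix m n ℝ) :=
  inferInstanceAs (BorelSpace (m → n → ℝ))

end Matrix

namespace Matrix.orthogonalGroup

variable {n : Type*} [Fintype n] [DecidableEq n]

lemma conj_mul_conj (H : orthogonalGroup n ℝ) (X Y : Matrix n n ℝ) :
    (H * X * (H : Matrix n n ℝ)ᵀ) * (H * Y * (H : Matrix n n ℝ)ᵀ)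
      = H * (X * Y) * (H : Matrix n n ℝ)ᵀ := by
  simp only [Matrix.mul_assoc]
  rw [← Matrix.mul_assoc (H : Matrix n n ℝ)ᵀ, (mem_orthogonalGroup_iff' n ℝ).mp H.2,
    Matrix.one_mul]

lemma trace_conj (H : orthogonalGroup n ℝ) (X : Matrix n n ℝ) :
    (H * X * (H : Matrix n n ℝ)ᵀ).trace = X.trace := by
  rw [trace_mul_cycle, (mem_orthogonalGroup_iff' n ℝ).mp H.2, Matrix.one_mul]

lemma integrable_of_continuous {μ : Measure (orthogonalGroup n ℝ)} [IsFiniteMeasure μ]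
    {φ : Matrix n n ℝ → ℝ} (hφ : Continuous φ) :
    Integrable (fun H : orthogonalGroup n ℝ => φ H) μ := by
  obtain ⟨C, hC⟩ := (isCompact_univ_pi fun _ => isCompact_univ_pi fun _ =>
    isCompact_Icc (a := (-1 : ℝ)) (b := 1)).exists_bound_of_continuousOn hφ.continuousOn
  refine Integrable.of_bound (hφ.comp continuous_subtype_val).aestronglyMeasurable C
    (ae_of_all _ fun H => hC _ ?_)
  exact Set.mem_univ_pi.mpr fun i => Set.mem_univ_pi.mpr fun j =>
    abs_le.mp (entry_norm_bound_of_unitary H.2 i j)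

end Matrix.orthogonalGroup

section MeanWedgeSq

variable {n : Type*} [Fintype n] [DecidableEq n]
  (μ : Measure (orthogonalGroup n ℝ)) (B : Matrix n n ℝ)

noncomputable def meanWedgeSq : Matrix (n × n) (n × n) ℝ :=
  of fun p q => ∫ H : orthogonalGroup n ℝ,
    wedgeSq ((H : Matrix n n ℝ) * B * (H : Matrix n n ℝ)ᵀ) p q ∂μ

lemma integrable_wedgeSq_conj [IsFiniteMeasure μ] (p q : n × n) :
    Integrable (fun H : orthogonalGroup n ℝ =>
      wedgeSq ((H : Matrix n n ℝ) * B * (H : Matrix n n ℝ)ᵀ) p q) μ :=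
  orthogonalGroup.integrable_of_continuous (φ := fun M => wedgeSq (M * B * Mᵀ) p q)
    (by simp only [wedgeSq_apply]; fun_prop)

lemma integral_wedgeSq_conj_mul [μ.IsMulLeftInvariant] (g : orthogonalGroup n ℝ)
    (p q : n × n) :
    ∫ H : orthogonalGroup n ℝ, wedgeSq ((g : Matrix n n ℝ) *
        ((H : Matrix n n ℝ) * B * (H : Matrix n n ℝ)ᵀ) * (g : Matrix n n ℝ)ᵀ) p q ∂μ
      = meanWedgeSq μ B p q := by
  symm
  rw [meanWedgeSq, of_apply, ← integral_mul_left_eq_self _ g]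
  simp only [MulMemClass.coe_mul, transpose_mul, Matrix.mul_assoc]

lemma meanWedgeSq_submatrix_perm [μ.IsMulLeftInvariant] (σ : Equiv.Perm n) :
    (meanWedgeSq μ B).submatrix (Prod.map σ σ) (Prod.map σ σ) = meanWedgeSq μ B := by
  ext p q
  rw [← integral_wedgeSq_conj_mul μ B ⟨_, permMatrix_mem_orthogonalGroup σ⟩]
  simp only [permMatrix_mul_mul_transpose, wedgeSq_submatrix]
  rfl

lemma meanWedgeSq_swap (i k : n) (q : n × n) :
    meanWedgeSq μ B (k, i) q = -meanWedgeSq μ B (i, k) q := by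
  simp only [meanWedgeSq, of_apply, ← integral_neg, wedgeSq_apply, neg_sub]
  congr 1 with H
  ring

lemma meanWedgeSq_eq_zero_of_ne [μ.IsMulLeftInvariant] {x k j l : n}
    (hk : k ≠ x) (hj : j ≠ x) (hl : l ≠ x) : meanWedgeSq μ B (x, k) (j, l) = 0 := by
  set d : n → ℝ := fun a => if a = x then -1 else 1
  have hd : ∀ a, d a * d a = 1 := fun a => by simp only [d]; split_ifs <;> norm_num
  have := integral_wedgeSq_conj_mul μ B ⟨_, diagonal_mem_orthogonalGroup hd⟩ (x, k) (j, l)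
  simp only [diagonal_transpose, wedgeSq_diagonal_mul_mul_diagonal, integral_const_mul] at this
  simp [d, hk, hj, hl, meanWedgeSq] at this ⊢
  linarith

lemma exists_meanWedgeSq_eq_smul [Nontrivial n] [μ.IsMulLeftInvariant] :
    ∃ c : ℝ, meanWedgeSq μ B = c • wedgeSq (1 : Matrix n n ℝ) :=
  exists_eq_smul_wedgeSq_one _ (meanWedgeSq_submatrix_perm μ B) (meanWedgeSq_swap μ B)
    fun _ _ _ _ => meanWedgeSq_eq_zero_of_ne μ B

lemma trace_meanWedgeSq [IsProbabilityMeasure μ] :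
    (meanWedgeSq μ B).trace = B.trace ^ 2 - (B * B).trace := by
  rw [← Matrix.one_mul (meanWedgeSq μ B), meanWedgeSq,
    trace_mul_integral_entrywise _ (integrable_wedgeSq_conj μ B)]
  simp only [Matrix.one_mul, trace_wedgeSq, orthogonalGroup.conj_mul_conj,
    orthogonalGroup.trace_conj, integral_const, probReal_univ, one_smul]

lemma integral_trace_sq_sub_trace_mul_self [IsFiniteMeasure μ] (A : Matrix n n ℝ) :
    ∫ H : orthogonalGroup n ℝ, (A * H * B * (H : Matrix n n ℝ)ᵀ).trace ^ 2
        - (A * H * B * (H : Matrix n n ℝ)ᵀ * (A * H * B * (H : Matrix n n ℝ)ᵀ)).trace ∂μ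
      = (wedgeSq A * meanWedgeSq μ B).trace / 2 := by
  rw [meanWedgeSq, trace_mul_integral_entrywise _ (integrable_wedgeSq_conj μ B),
    ← integral_div]
  congr 1 with H
  rw [wedgeSq_mul, trace_smul, trace_wedgeSq, smul_eq_mul]
  simp only [Matrix.mul_assoc]
  ring

end MeanWedgeSq

theorem stmt2_general (m : ℕ) (hm : 2 ≤ m)
    (A B : Matrix (Fin m) (Fin m) ℝ)
    (μ : Measure (Matrix.orthogonalGroup (Fin m) ℝ)) [IsProbabilityMeasure μ]
    (hμ : ∀ g : Matrix.orthogonalGroup (Fin m) ℝ,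
      μ.map (fun h => g * h) = μ) :
    (∫ H : Matrix.orthogonalGroup (Fin m) ℝ,
        (fun M : Matrix (Fin m) (Fin m) ℝ => M.trace ^ 2 - (M * M).trace)
          (A * (H : Matrix (Fin m) (Fin m) ℝ) * B * (H : Matrix (Fin m) (Fin m) ℝ)ᵀ) ∂μ)
      = (A.trace ^ 2 - (A * A).trace) * (B.trace ^ 2 - (B * B).trace)
          / ((m : ℝ) * ((m : ℝ) - 1)) := by
  have : μ.IsMulLeftInvariant := ⟨hμ⟩
  have : Nontrivial (Fin m) := Fin.nontrivial_iff_two_le.mpr hm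
  obtain ⟨c, hc⟩ := exists_meanWedgeSq_eq_smul μ B
  have hB := trace_meanWedgeSq μ B
  rw [hc, trace_smul, trace_wedgeSq] at hB
  have hm' : (m : ℝ) * ((m : ℝ) - 1) ≠ 0 := by
    have : (2 : ℝ) ≤ m := by exact_mod_cast hm
    nlinarith
  rw [integral_trace_sq_sub_trace_mul_self μ B A, hc, mul_smul_comm, trace_smul, wedgeSq_mul,
    Matrix.mul_one, trace_smul, trace_wedgeSq, ← hB, eq_div_iff hm']
  simp only [trace_one, Matrix.mul_one, Fintype.card_fin, smul_eq_mul]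
  ring

/-- For `A` positive definite symmetric, `B` positive semidefinite symmetric
(`m × m` real matrices, `m ≥ 2`), and `μ` the Haar probability measure on `O(m)`,
`∫ [(tr(A H B Hᵀ))² − tr((A H B Hᵀ)²)] dH
  = [(tr A)² − tr(A²)]·[(tr B)² − tr(B²)]/(m(m−1))`. -/
theorem stmt2 (m : ℕ) (hm : 2 ≤ m)
    (A B : Matrix (Fin m) (Fin m) ℝ)
    (hA : A.PosDef) (hAs : A.IsSymm) (hB : B.PosSemidef) (hBs : B.IsSymm)
    (μ : Measure (Matrix.orthogonalGroup (Fin m) ℝ)) [IsProbabilityMeasure μ]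
    (hμ : ∀ g : Matrix.orthogonalGroup (Fin m) ℝ,
      μ.map (fun h => g * h) = μ) :
    (∫ H : Matrix.orthogonalGroup (Fin m) ℝ,
        (fun M : Matrix (Fin m) (Fin m) ℝ => M.trace ^ 2 - (M * M).trace)
          (A * (H : Matrix (Fin m) (Fin m) ℝ) * B * (H : Matrix (Fin m) (Fin m) ℝ)ᵀ) ∂μ)
      = (A.trace ^ 2 - (A * A).trace) * (B.trace ^ 2 - (B * B).trace)
          / ((m : ℝ) * ((m : ℝ) - 1)) :=
  stmt2_general m hm A B μ hμ
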